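/- arXiv:2310.02839 — 2 statements merged into one kernel-verified Lean document; each statement's English description precedes it below -/
import Mathlib

section
/- Let x_1, …, x_n be n ≥ 2 points in the unit square [0,1]^2 ⊂ ℝ^2, where n is even. Then there exists a perfect matching M of the n points (a partition into n/2 pairs) such that Σ_{e ∈ M} |e|^2 ≤ 2. -/
/-!
Inside a right isosceles triangle with hypotenuse `se` and right angle at `c`, any finite set of
points can be threaded into a path from `s` to `e` whose squared edge lengths sum to at most
`|se|²`. Cut the triangle by its altitude from `c` into two half-size right isosceles triangles
with hypotenuses `sc` and `ce`, thread each half recursively, and concatenate the two paths: the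
detour through `c` may be dropped because `∠xcy ≤ π/2` for all `x, y` in the triangle, and
`|sc|² + |ce|² = |se|²`. The recursion terminates since the halves shrink while the points stay
apart.

The diagonal from `(0,0)` to `(1,1)` cuts the unit square into two such triangles, so the points
lie on a closed tour `(0,0) → (1,1) → (0,0)` of squared length at most `4`; dropping the corner
`(0,0)` (again a right angle) keeps this bound. An even closed tour is the union of two perfect
matchings, and one of them has cost at most `2`.
-/

open scoped RealInnerProductSpace

section Cost

variable {α : Type*} [PseudoMetricSpace α]

noncomputable def pathCost : α → List α → α → ℝ
  | s, [], e => dist s e ^ 2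
  | s, p :: l, e => dist s p ^ 2 + pathCost p l e

noncomputable def tourCost : List α → ℝ
  | [] => 0
  | x :: l => pathCost x l x

noncomputable def pairingCost : List α → ℝ
  | x :: y :: l => dist x y ^ 2 + pairingCost l
  | _ => 0

theorem pairingCost_cons_append_add_pairingCost :
    ∀ (w : α) (l : List α) (x : α), Even l.length →
      pairingCost (w :: (l ++ [x])) + pairingCost l = pathCost w l x
  | w, [], x, _ => by simp [pairingCost, pathCost]
  | _, [_], _, h => by simp at h
  | w, y :: z :: l, x, h => by
    have := pairingCost_cons_append_add_pairingCost z l x (by simpa [Nat.even_add_one] using h)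
    simp only [List.cons_append, pairingCost, pathCost]
    linarith

theorem pairingCost_add_pairingCost_rotate :
    ∀ l : List α, Even l.length → pairingCost l + pairingCost (l.rotate 1) = tourCost l
  | [], _ => by simp [pairingCost, tourCost]
  | [_], h => by simp at h
  | x :: y :: l, h => by
    have := pairingCost_cons_append_add_pairingCost y l x (by simpa [Nat.even_add_one] using h)
    simp only [List.rotate_cons_succ, List.rotate_zero, List.cons_append, pairingCost, tourCost,
      pathCost] at this ⊢
    linarith

end Cost

section Pairing

open Equiv

variable {α : Type*} [DecidableEq α]

def pairing : List α → Perm α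
  | x :: y :: l => pairing l * swap x y
  | _ => 1

theorem pairing_apply_of_not_mem : ∀ {l : List α} {p : α}, p ∉ l → pairing l p = p
  | [], _, _ => rfl
  | [_], _, _ => rfl
  | x :: y :: l, p, h => by
    simp only [List.mem_cons, not_or] at h
    rw [pairing, Perm.mul_apply, swap_apply_of_ne_of_ne h.1 h.2.1, pairing_apply_of_not_mem h.2.2]

theorem pairing_cons_cons_apply_of_mem {x y : α} {l : List α} (hl : (x :: y :: l).Nodup) {p : α}
    (hp : p ∈ l) : pairing (x :: y :: l) p = pairing l p := by
  simp only [List.nodup_cons, List.mem_cons, not_or] at hl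
  rw [pairing, Perm.mul_apply,
    swap_apply_of_ne_of_ne (ne_of_mem_of_not_mem hp hl.1.2) (ne_of_mem_of_not_mem hp hl.2.1)]

theorem pairing_mul_self : ∀ {l : List α}, l.Nodup → pairing l * pairing l = 1
  | [], _ => rfl
  | [_], _ => rfl
  | x :: y :: l, hl => by
    obtain ⟨⟨-, hx⟩, hy, hl⟩ : (x ≠ y ∧ x ∉ l) ∧ y ∉ l ∧ l.Nodup := by simpa using hl
    have hcomm : pairing l * swap x y = swap x y * pairing l := by
      rw [mul_swap_eq_swap_mul, pairing_apply_of_not_mem hx, pairing_apply_of_not_mem hy]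
    rw [pairing, mul_assoc, ← mul_assoc (swap x y), ← hcomm, mul_assoc, swap_mul_self, mul_one,
      pairing_mul_self hl]

theorem pairing_involutive {l : List α} (hl : l.Nodup) : Function.Involutive (pairing l) :=
  fun p => by rw [← Perm.mul_apply, pairing_mul_self hl, Perm.one_apply]

theorem pairing_apply_mem {l : List α} (hl : l.Nodup) {p : α} (hp : p ∈ l) : pairing l p ∈ l := by
  by_contra h
  have hfix := pairing_apply_of_not_mem h
  rw [pairing_involutive hl p] at hfix
  exact h (hfix ▸ hp)

theorem pairing_apply_ne : ∀ {l : List α}, l.Nodup → Even l.length → ∀ {p : α}, p ∈ l →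
    pairing l p ≠ p
  | [_], _, h, _, _ => by simp at h
  | x :: y :: l, hl, he, p, hp => by
    obtain ⟨⟨hxy, hx⟩, hy, hl'⟩ : (x ≠ y ∧ x ∉ l) ∧ y ∉ l ∧ l.Nodup := by simpa using hl
    rcases List.mem_cons.1 hp with rfl | hp
    · rw [pairing, Perm.mul_apply, swap_apply_left, pairing_apply_of_not_mem hy]
      exact hxy.symm
    rcases List.mem_cons.1 hp with rfl | hp
    · rw [pairing, Perm.mul_apply, swap_apply_right, pairing_apply_of_not_mem hx]
      exact hxy
    rw [pairing_cons_cons_apply_of_mem hl hp]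
    exact pairing_apply_ne hl' (by simpa [Nat.even_add_one] using he) hp

theorem sum_map_dist_pairing [PseudoMetricSpace α] : ∀ {l : List α}, l.Nodup →
    (l.map fun p => dist p (pairing l p) ^ 2).sum = 2 * pairingCost l
  | [], _ => by simp [pairingCost]
  | [_], _ => by simp [pairing, pairingCost]
  | x :: y :: l, hl => by
    rw [List.map_cons, List.map_cons,
      List.map_congr_left fun p hp => by rw [pairing_cons_cons_apply_of_mem hl hp]]
    obtain ⟨⟨-, hx⟩, hy, hl⟩ : (x ≠ y ∧ x ∉ l) ∧ y ∉ l ∧ l.Nodup := by simpa using hl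
    rw [List.sum_cons, List.sum_cons, sum_map_dist_pairing hl, pairing, Perm.mul_apply,
      Perm.mul_apply, swap_apply_left, swap_apply_right, pairing_apply_of_not_mem hy,
      pairing_apply_of_not_mem hx, pairingCost, dist_comm y x]
    ring

theorem exists_involutive_sum_dist_sq_eq [PseudoMetricSpace α] {l : List α} (hl : l.Nodup)
    (he : Even l.length) :
    ∃ φ : l.toFinset → l.toFinset, Function.Involutive φ ∧ (∀ x, φ x ≠ x) ∧
      ∑ x : l.toFinset, dist (x : α) (φ x : α) ^ 2 = 2 * pairingCost l := by
  refine ⟨fun x => ⟨pairing l x, List.mem_toFinset.2 (pairing_apply_mem hl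
    (List.mem_toFinset.1 x.2))⟩, fun x => Subtype.ext (pairing_involutive hl x), fun x h =>
    pairing_apply_ne hl he (List.mem_toFinset.1 x.2) (congrArg Subtype.val h), ?_⟩
  rw [← sum_map_dist_pairing hl, ← List.sum_toFinset _ hl]
  exact Finset.sum_coe_sort l.toFinset fun p => dist p (pairing l p) ^ 2

end Pairing

theorem exists_pos_pairwise_le_dist {α : Type*} [MetricSpace α] :
    ∀ {l : List α}, l.Nodup → ∃ δ > 0, l.Pairwise fun x y => δ ≤ dist x y
  | [], _ => ⟨1, one_pos, .nil⟩
  | p :: l, hl => by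
    rw [List.nodup_cons] at hl
    obtain ⟨δ, hδ, hsep⟩ := exists_pos_pairwise_le_dist hl.2
    obtain ⟨ε, hε, hball⟩ := Metric.isOpen_iff.1 l.finite_toSet.isClosed.isOpen_compl p hl.1
    refine ⟨min δ ε, lt_min hδ hε, List.pairwise_cons.2 ⟨fun q hq => ?_,
      hsep.imp fun h => (min_le_left _ _).trans h⟩⟩
    have hq' : q ∉ Metric.ball p ε := fun h => hball h hq
    rw [Metric.mem_ball, not_lt, dist_comm] at hq'
    exact (min_le_right _ _).trans hq'

section InnerProductSpace

variable {E : Type*} [NormedAddCommGroup E] [InnerProductSpace ℝ E]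

theorem dist_sq_le_of_inner_nonneg {x y c : E} (h : 0 ≤ ⟪x - c, y - c⟫) :
    dist x y ^ 2 ≤ dist x c ^ 2 + dist c y ^ 2 := by
  rw [dist_eq_norm, dist_eq_norm, dist_eq_norm, ← sub_sub_sub_cancel_right x y c,
    norm_sub_sq_real, norm_sub_rev c y]
  linarith

theorem pathCost_append_le (c : E) : ∀ (s : E) (l₁ l₂ : List E) (e : E),
    (∀ x ∈ s :: l₁, ∀ y ∈ e :: l₂, 0 ≤ ⟪x - c, y - c⟫) →
      pathCost s (l₁ ++ l₂) e ≤ pathCost s l₁ c + pathCost c l₂ e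
  | s, [], [], e, h => dist_sq_le_of_inner_nonneg (h s (by simp) e (by simp))
  | s, [], y :: l₂, e, h => by
    simp only [List.nil_append, pathCost]
    linarith [dist_sq_le_of_inner_nonneg (h s (by simp) y (by simp))]
  | s, p :: l₁, l₂, e, h => by
    simp only [List.cons_append, pathCost]
    linarith [pathCost_append_le c p l₁ l₂ e fun x hx => h x (List.mem_cons_of_mem s hx)]

theorem tourCost_le_pathCost {c : E} : ∀ {l : List E},
    (∀ x ∈ l, ∀ y ∈ l, 0 ≤ ⟪x - c, y - c⟫) → tourCost l ≤ pathCost c l c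
  | [], _ => by simp [tourCost, pathCost]
  | x :: l, h => by
    have := pathCost_append_le c x l [] x fun y hy z hz => h y hy z (by simp_all)
    rw [List.append_nil] at this
    simp only [tourCost, pathCost] at this ⊢
    linarith [dist_comm x c]

def IsRightIsosceles (s e c : E) : Prop :=
  ⟪s - c, e - c⟫ = 0 ∧ dist s c = dist e c

def triangle (s e c : E) : Set E :=
  {p | ∃ a b : ℝ, 0 ≤ a ∧ 0 ≤ b ∧ a + b ≤ 1 ∧ p = c + a • (s - c) + b • (e - c)}

theorem inner_smul_add_smul_of_inner_eq_zero {u v : E} (h : ⟪u, v⟫ = 0) (a b a' b' : ℝ) :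
    ⟪a • u + b • v, a' • u + b' • v⟫ = a * a' * ‖u‖ ^ 2 + b * b' * ‖v‖ ^ 2 := by
  have h' : ⟪v, u⟫ = 0 := by rwa [real_inner_comm]
  simp only [inner_add_left, inner_add_right, real_inner_smul_left, real_inner_smul_right, h, h',
    real_inner_self_eq_norm_sq]
  ring

theorem dist_sq_eq_of_inner_eq_zero {u v : E} (h : ⟪u, v⟫ = 0) {x y : E} {a b : ℝ}
    (hxy : x - y = a • u + b • v) : dist x y ^ 2 = a ^ 2 * ‖u‖ ^ 2 + b ^ 2 * ‖v‖ ^ 2 := by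
  rw [dist_eq_norm, ← real_inner_self_eq_norm_sq, hxy, inner_smul_add_smul_of_inner_eq_zero h]
  ring

section Triangle

variable {s e c p q : E}

theorem dist_sq_add_dist_sq_eq_of_inner_eq_zero (h : ⟪s - c, e - c⟫ = 0) :
    dist s c ^ 2 + dist c e ^ 2 = dist s e ^ 2 := by
  rw [dist_sq_eq_of_inner_eq_zero h (a := 1) (b := 0) (by module),
    dist_sq_eq_of_inner_eq_zero h (a := 0) (b := -1) (by module),
    dist_sq_eq_of_inner_eq_zero h (a := 1) (b := -1) (by module)]
  ring

theorem left_mem_triangle : s ∈ triangle s e c :=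
  ⟨1, 0, zero_le_one, le_rfl, by norm_num, by module⟩

theorem right_mem_triangle : e ∈ triangle s e c :=
  ⟨0, 1, le_rfl, zero_le_one, by norm_num, by module⟩

theorem inner_sub_nonneg_of_mem_triangle (h : ⟪s - c, e - c⟫ = 0) (hp : p ∈ triangle s e c)
    (hq : q ∈ triangle s e c) : 0 ≤ ⟪p - c, q - c⟫ := by
  obtain ⟨a, b, ha, hb, -, rfl⟩ := hp
  obtain ⟨a', b', ha', hb', -, rfl⟩ := hq
  rw [add_assoc, add_sub_cancel_left, add_assoc, add_sub_cancel_left,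
    inner_smul_add_smul_of_inner_eq_zero h]
  positivity

theorem dist_sq_le_of_mem_triangle (h : ⟪s - c, e - c⟫ = 0) (hp : p ∈ triangle s e c)
    (hq : q ∈ triangle s e c) : dist p q ^ 2 ≤ dist s e ^ 2 := by
  obtain ⟨a, b, ha, hb, hab, rfl⟩ := hp
  obtain ⟨a', b', ha', hb', hab', rfl⟩ := hq
  rw [dist_sq_eq_of_inner_eq_zero h (a := a - a') (b := b - b') (by module),
    dist_sq_eq_of_inner_eq_zero h (a := 1) (b := -1) (by module)]
  have hu : (a - a') ^ 2 ≤ 1 := by nlinarith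
  have hv : (b - b') ^ 2 ≤ 1 := by nlinarith
  nlinarith [mul_le_mul_of_nonneg_right hu (sq_nonneg ‖s - c‖),
    mul_le_mul_of_nonneg_right hv (sq_nonneg ‖e - c‖)]

theorem dist_sq_add_dist_sq_le_of_mem_triangle (h : ⟪s - c, e - c⟫ = 0)
    (hp : p ∈ triangle s e c) : dist s p ^ 2 + dist p e ^ 2 ≤ dist s e ^ 2 := by
  obtain ⟨a, b, ha, hb, hab, rfl⟩ := hp
  rw [dist_sq_eq_of_inner_eq_zero h (a := 1 - a) (b := -b) (by module),
    dist_sq_eq_of_inner_eq_zero h (a := a) (b := b - 1) (by module),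
    dist_sq_eq_of_inner_eq_zero h (a := 1) (b := -1) (by module)]
  nlinarith [mul_nonneg (mul_nonneg ha (by linarith : 0 ≤ 1 - a)) (sq_nonneg ‖s - c‖),
    mul_nonneg (mul_nonneg hb (by linarith : 0 ≤ 1 - b)) (sq_nonneg ‖e - c‖)]

theorem triangle_subset_union :
    triangle s e c ⊆ triangle s c (midpoint ℝ s e) ∪ triangle c e (midpoint ℝ s e) := by
  rintro _ ⟨a, b, ha, hb, hab, rfl⟩
  rw [midpoint_eq_smul_add, invOf_eq_inv]
  rcases le_total b a with hba | hab'
  · exact .inl ⟨a - b, 1 - a - b, by linarith, by linarith, by linarith, by module⟩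
  · exact .inr ⟨1 - a - b, b - a, by linarith, by linarith, by linarith, by module⟩

theorem IsRightIsosceles.left_half (h : IsRightIsosceles s e c) :
    IsRightIsosceles s c (midpoint ℝ s e) := by
  obtain ⟨horth, hiso⟩ := h
  rw [dist_eq_norm, dist_eq_norm] at hiso
  rw [IsRightIsosceles, midpoint_eq_smul_add, invOf_eq_inv]
  constructor
  · rw [show s - (2⁻¹ : ℝ) • (s + e) = (2⁻¹ : ℝ) • (s - c) + (-2⁻¹ : ℝ) • (e - c) by module,
      show c - (2⁻¹ : ℝ) • (s + e) = (-2⁻¹ : ℝ) • (s - c) + (-2⁻¹ : ℝ) • (e - c) by module,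
      inner_smul_add_smul_of_inner_eq_zero horth, hiso]
    ring
  · rw [← sq_eq_sq₀ dist_nonneg dist_nonneg,
      dist_sq_eq_of_inner_eq_zero horth (a := 2⁻¹) (b := -2⁻¹) (by module),
      dist_sq_eq_of_inner_eq_zero horth (a := -2⁻¹) (b := -2⁻¹) (by module)]
    ring

theorem IsRightIsosceles.symm (h : IsRightIsosceles s e c) : IsRightIsosceles e s c :=
  ⟨by rw [real_inner_comm, h.1], h.2.symm⟩

theorem IsRightIsosceles.right_half (h : IsRightIsosceles s e c) :
    IsRightIsosceles c e (midpoint ℝ s e) := by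
  simpa only [midpoint_comm e s] using h.symm.left_half.symm

theorem exists_perm_pathCost_le_of_pairwise {ε : ℝ} (k : ℕ) :
    ∀ {s e c : E}, IsRightIsosceles s e c → dist s e ^ 2 < 2 ^ k * ε →
      ∀ {l : List E}, l.Pairwise (fun p q => ε ≤ dist p q ^ 2) →
        (∀ p ∈ l, p ∈ triangle s e c) → ∃ l', l.Perm l' ∧ pathCost s l' e ≤ dist s e ^ 2 := by
  induction k with
  | zero =>
    intro s e c h hse l hsep hl
    refine ⟨l, .refl l, ?_⟩
    match l, hsep, hl with
    | [], _, _ => exact le_rfl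
    | [p], _, hl => exact dist_sq_add_dist_sq_le_of_mem_triangle h.1 (hl p (by simp))
    | p :: q :: _, hsep, hl =>
      have hpq := List.rel_of_pairwise_cons hsep (a' := q) (by simp)
      have := dist_sq_le_of_mem_triangle h.1 (hl p (by simp)) (hl q (by simp))
      rw [pow_zero, one_mul] at hse
      linarith
  | succ k ih =>
    intro s e c h hse l hsep hl
    classical
    have hsc : dist s c ^ 2 = dist s e ^ 2 / 2 := by
      rw [← dist_sq_add_dist_sq_eq_of_inner_eq_zero h.1, dist_comm c e, ← h.2]; ring
    have hce : dist c e ^ 2 = dist s e ^ 2 / 2 := by rw [dist_comm, ← h.2, hsc]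
    rw [pow_succ (2 : ℝ)] at hse
    obtain ⟨l₁, hperm₁, hcost₁⟩ := ih h.left_half (by linarith) (hsep.filter _)
      (l := l.filter (· ∈ triangle s c (midpoint ℝ s e))) fun p hp => by
        simpa using (List.mem_filter.1 hp).2
    obtain ⟨l₂, hperm₂, hcost₂⟩ := ih h.right_half (by linarith) (hsep.filter _)
      (l := l.filter (· ∉ triangle s c (midpoint ℝ s e))) fun p hp => by
        rw [List.mem_filter, decide_eq_true_iff] at hp
        exact (triangle_subset_union (hl p hp.1)).resolve_left hp.2
    have hperm : l.Perm (l₁ ++ l₂) :=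
      (List.filter_append_perm _ l).symm.trans (by simpa using hperm₁.append hperm₂)
    have hT : ∀ x ∈ l₁ ++ l₂, x ∈ triangle s e c := fun x hx => hl x (hperm.mem_iff.2 hx)
    have hT₁ : ∀ x ∈ s :: l₁, x ∈ triangle s e c :=
      List.forall_mem_cons.2 ⟨left_mem_triangle, fun x hx => hT x (List.mem_append_left _ hx)⟩
    have hT₂ : ∀ y ∈ e :: l₂, y ∈ triangle s e c :=
      List.forall_mem_cons.2 ⟨right_mem_triangle, fun y hy => hT y (List.mem_append_right _ hy)⟩
    refine ⟨l₁ ++ l₂, hperm, ?_⟩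
    calc pathCost s (l₁ ++ l₂) e ≤ pathCost s l₁ c + pathCost c l₂ e :=
          pathCost_append_le c s l₁ l₂ e fun x hx y hy =>
            inner_sub_nonneg_of_mem_triangle h.1 (hT₁ x hx) (hT₂ y hy)
      _ ≤ dist s c ^ 2 + dist c e ^ 2 := add_le_add hcost₁ hcost₂
      _ = dist s e ^ 2 := dist_sq_add_dist_sq_eq_of_inner_eq_zero h.1

theorem IsRightIsosceles.exists_perm_pathCost_le (h : IsRightIsosceles s e c) {l : List E}
    (hl : l.Nodup) (hT : ∀ p ∈ l, p ∈ triangle s e c) :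
    ∃ l', l.Perm l' ∧ pathCost s l' e ≤ dist s e ^ 2 := by
  obtain ⟨δ, hδ, hsep⟩ := exists_pos_pairwise_le_dist hl
  obtain ⟨k, hk⟩ := pow_unbounded_of_one_lt (dist s e ^ 2 / δ ^ 2) one_lt_two
  rw [div_lt_iff₀ (by positivity)] at hk
  exact exists_perm_pathCost_le_of_pairwise k h hk
    (hsep.imp fun hpq => pow_le_pow_left₀ hδ.le hpq 2) hT

end Triangle

end InnerProductSpace

local notation "ℝ²" => EuclideanSpace ℝ (Fin 2)

def unitSquare : Set ℝ² := {p | ∀ i, p i ∈ Set.Icc 0 1}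

theorem inner_fin_two (x y : ℝ²) : ⟪x, y⟫ = x 0 * y 0 + x 1 * y 1 := by
  simp only [PiLp.inner_apply, Fin.sum_univ_two, RCLike.inner_apply, conj_trivial]
  ring

theorem dist_sq_fin_two (x y : ℝ²) : dist x y ^ 2 = (x 0 - y 0) ^ 2 + (x 1 - y 1) ^ 2 := by
  rw [EuclideanSpace.dist_eq, Real.sq_sqrt (by positivity), Fin.sum_univ_two, Real.dist_eq,
    Real.dist_eq, sq_abs, sq_abs]

theorem inner_sub_nonneg_of_mem_unitSquare {c x y : ℝ²} (hc : ∀ i, c i = 0 ∨ c i = 1)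
    (hx : x ∈ unitSquare) (hy : y ∈ unitSquare) : 0 ≤ ⟪x - c, y - c⟫ := by
  have hcoord : ∀ i, 0 ≤ (x i - c i) * (y i - c i) := fun i => by
    obtain ⟨hx₀, hx₁⟩ := hx i
    obtain ⟨hy₀, hy₁⟩ := hy i
    rcases hc i with hci | hci <;> rw [hci]
    exacts [by nlinarith, by nlinarith]
  rw [inner_fin_two]
  exact add_nonneg (hcoord 0) (hcoord 1)

theorem unitSquare_subset_union :
    unitSquare ⊆ triangle 0 !₂[1, 1] !₂[1, 0] ∪ triangle !₂[1, 1] 0 !₂[0, 1] := by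
  intro p hp
  obtain ⟨hp₀, hp₀'⟩ := hp 0
  obtain ⟨hp₁, hp₁'⟩ := hp 1
  rcases le_total (p 1) (p 0) with h | h
  · refine .inl ⟨1 - p 0, p 1, by linarith, hp₁, by linarith, ?_⟩
    ext i; fin_cases i <;> simp
  · refine .inr ⟨p 0, 1 - p 1, hp₀, by linarith, by linarith, ?_⟩
    ext i; fin_cases i <;> simp

theorem isRightIsosceles_lower : IsRightIsosceles (0 : ℝ²) !₂[1, 1] !₂[1, 0] := by
  refine ⟨by simp [inner_fin_two], ?_⟩
  rw [← sq_eq_sq₀ dist_nonneg dist_nonneg, dist_sq_fin_two, dist_sq_fin_two]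
  simp

theorem isRightIsosceles_upper : IsRightIsosceles !₂[1, 1] (0 : ℝ²) !₂[0, 1] := by
  refine ⟨by simp [inner_fin_two], ?_⟩
  rw [← sq_eq_sq₀ dist_nonneg dist_nonneg, dist_sq_fin_two, dist_sq_fin_two]
  simp

theorem dist_zero_one_one_sq : dist (0 : ℝ²) !₂[1, 1] ^ 2 = 2 := by
  rw [dist_sq_fin_two]
  norm_num

theorem exists_perm_tourCost_le_four {l : List ℝ²} (hl : l.Nodup)
    (hsq : ∀ p ∈ l, p ∈ unitSquare) : ∃ l', l.Perm l' ∧ tourCost l' ≤ 4 := by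
  classical
  obtain ⟨l₁, hperm₁, hcost₁⟩ := isRightIsosceles_lower.exists_perm_pathCost_le (hl.filter _)
    (l := l.filter (· ∈ triangle 0 !₂[1, 1] !₂[1, 0])) fun p hp => by
      simpa using (List.mem_filter.1 hp).2
  obtain ⟨l₂, hperm₂, hcost₂⟩ := isRightIsosceles_upper.exists_perm_pathCost_le (hl.filter _)
    (l := l.filter (· ∉ triangle 0 !₂[1, 1] !₂[1, 0])) fun p hp => by
      rw [List.mem_filter, decide_eq_true_iff] at hp
      exact (unitSquare_subset_union (hsq p hp.1)).resolve_left hp.2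
  have hperm : l.Perm (l₁ ++ l₂) :=
    (List.filter_append_perm _ l).symm.trans (by simpa using hperm₁.append hperm₂)
  have hsq' : ∀ x ∈ l₁ ++ l₂, x ∈ unitSquare := fun x hx => hsq x (hperm.mem_iff.2 hx)
  have hsq₁ : ∀ x ∈ (0 : ℝ²) :: l₁, x ∈ unitSquare :=
    List.forall_mem_cons.2 ⟨fun i => by simp, fun x hx => hsq' x (List.mem_append_left _ hx)⟩
  have hsq₂ : ∀ x ∈ (0 : ℝ²) :: l₂, x ∈ unitSquare :=
    List.forall_mem_cons.2 ⟨fun i => by simp, fun x hx => hsq' x (List.mem_append_right _ hx)⟩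
  have hcorner₀ : ∀ i, (0 : ℝ²) i = 0 ∨ (0 : ℝ²) i = 1 := fun i => by simp
  have hcorner₁ : ∀ i, !₂[(1 : ℝ), 1] i = 0 ∨ !₂[(1 : ℝ), 1] i = 1 := fun i => by
    fin_cases i <;> simp
  rw [dist_zero_one_one_sq] at hcost₁
  rw [dist_comm, dist_zero_one_one_sq] at hcost₂
  refine ⟨l₁ ++ l₂, hperm, ?_⟩
  calc tourCost (l₁ ++ l₂) ≤ pathCost 0 (l₁ ++ l₂) 0 := tourCost_le_pathCost fun x hx y hy =>
        inner_sub_nonneg_of_mem_unitSquare hcorner₀ (hsq' x hx) (hsq' y hy)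
    _ ≤ pathCost 0 l₁ !₂[1, 1] + pathCost !₂[1, 1] l₂ 0 := pathCost_append_le _ _ _ _ _
        fun x hx y hy => inner_sub_nonneg_of_mem_unitSquare hcorner₁ (hsq₁ x hx) (hsq₂ y hy)
    _ ≤ 4 := by linarith

theorem exists_perm_pairingCost_le_two {l : List ℝ²} (hl : l.Nodup) (he : Even l.length)
    (hsq : ∀ p ∈ l, p ∈ unitSquare) : ∃ l', l.Perm l' ∧ pairingCost l' ≤ 2 := by
  obtain ⟨l', hperm, hcost⟩ := exists_perm_tourCost_le_four hl hsq
  have hsplit := pairingCost_add_pairingCost_rotate l' (hperm.length_eq ▸ he)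
  rcases le_total (pairingCost l') (pairingCost (l'.rotate 1)) with h | h
  · exact ⟨l', hperm, by linarith⟩
  · exact ⟨l'.rotate 1, hperm.trans (List.rotate_perm l' 1).symm, by linarith⟩

/-- The perfect matching is encoded as the fixed-point-free involution `φ` sending each point to
its partner; every pair is counted twice in the sum, hence the factor `1 / 2`. -/
theorem stmt_18_general (X : Finset (EuclideanSpace ℝ (Fin 2)))
    (heven : Even X.card) (hcube : ∀ x ∈ X, ∀ i, x i ∈ Set.Icc (0 : ℝ) 1) :
    ∃ φ : ↥X → ↥X, Function.Involutive φ ∧ (∀ x, φ x ≠ x) ∧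
      (1 / 2 : ℝ) *
          ∑ x : ↥X, dist (x : EuclideanSpace ℝ (Fin 2)) (φ x : EuclideanSpace ℝ (Fin 2)) ^ 2 ≤ 2 := by
  classical
  obtain ⟨l, hperm, hcost⟩ := exists_perm_pairingCost_le_two X.nodup_toList
    (by rwa [Finset.length_toList]) fun p hp => hcube p (Finset.mem_toList.1 hp)
  have hl : l.Nodup := hperm.nodup_iff.1 X.nodup_toList
  have he : Even l.length := by rwa [← hperm.length_eq, Finset.length_toList]
  obtain rfl : l.toFinset = X := by
    rw [← List.toFinset_eq_of_perm _ _ hperm, Finset.toList_toFinset]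
  obtain ⟨φ, hφ, hφne, hsum⟩ := exists_involutive_sum_dist_sq_eq hl he
  exact ⟨φ, hφ, hφne, by rw [hsum]; linarith⟩

/-- For a set of `n ≥ 2` points in the unit square `[0,1]²` with `n` even, there is a perfect
matching `M` of the points (encoded as a fixed-point-free involution `φ`, so that
`∑_{e ∈ M} |e|² = (1/2)∑_{x ∈ X} |x - φ(x)|²`) with `∑_{e ∈ M} |e|² ≤ 2`. -/
theorem stmt_18 (X : Finset (EuclideanSpace ℝ (Fin 2))) (hX : 2 ≤ X.card)
    (heven : Even X.card) (hcube : ∀ x ∈ X, ∀ i, x i ∈ Set.Icc (0 : ℝ) 1) :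
    ∃ φ : ↥X → ↥X, Function.Involutive φ ∧ (∀ x, φ x ≠ x) ∧
      (1 / 2 : ℝ) *
          ∑ x : ↥X, dist (x : EuclideanSpace ℝ (Fin 2)) (φ x : EuclideanSpace ℝ (Fin 2)) ^ 2 ≤ 2 :=
  stmt_18_general X heven hcube
end

section
/- Let k ≥ 3 and let X be a set of n points in the unit cube [0,1]^k ⊂ ℝ^k with 2 ≤ n ≤ 2^k + 2. Then there exists a Hamiltonian cycle H through the n points such that Σ_{e ∈ H} |e|^k ≤ (2 + (8/3)^{k/2}) · k^{k/2}. -/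
/-!
Among three points of `[0,1]^k` the squared pairwise distances sum to at most `2k`, so some pair
is at distance at most `b = √(2k/3)`. Inserting the points one at a time, this keeps them covered
by two paths whose edges all have length at most `b`. Joining the two paths into a tour adds two
edges of length at most the diameter `√k`, so the cost is at most
`2 k^{k/2} + (n - 2) b^k ≤ 2 k^{k/2} + 2^k (2k/3)^{k/2} = (2 + (8/3)^{k/2}) k^{k/2}`.
-/

theorem List.exists_perm_append_isChain_isChain {α : Type*} {R : α → α → Prop}
    (hR : Std.Symm R) :
    ∀ l : List α, (∀ x ∈ l, ∀ y ∈ l, ∀ z ∈ l, R x y ∨ R x z ∨ R y z) →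
      ∃ l₁ l₂ : List α, (l₁ ++ l₂).Perm l ∧ l₁.IsChain R ∧ l₂.IsChain R
  | [], _ => ⟨[], [], .nil, .nil, .nil⟩
  | a :: l, h => by
    obtain ⟨l₁, l₂, hperm, h₁, h₂⟩ := exists_perm_append_isChain_isChain hR l
      fun x hx y hy z hz =>
        h x (mem_cons_of_mem a hx) y (mem_cons_of_mem a hy) z (mem_cons_of_mem a hz)
    by_cases ha₁ : ∀ x ∈ l₁.head?, R a x
    · exact ⟨a :: l₁, l₂, hperm.cons a, h₁.cons ha₁, h₂⟩
    by_cases ha₂ : ∀ y ∈ l₂.head?, R a y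
    · exact ⟨l₁, a :: l₂, perm_middle.trans (hperm.cons a), h₁, h₂.cons ha₂⟩
    push Not at ha₁ ha₂
    obtain ⟨x, hx, hax⟩ := ha₁
    obtain ⟨y, hy, hay⟩ := ha₂
    have hxy : R x y := by
      have hmem : ∀ z ∈ l₁ ++ l₂, z ∈ a :: l :=
        fun z hz => mem_cons_of_mem a (hperm.subset hz)
      obtain hax' | hay' | hxy := h a mem_cons_self
        x (hmem x (mem_append_left _ (mem_of_mem_head? hx)))
        y (hmem y (mem_append_right _ (mem_of_mem_head? hy)))
      exacts [(hax hax').elim, (hay hay').elim, hxy]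
    -- `a` extends neither path, so the heads `x`, `y` are close and the paths join through them
    refine ⟨l₁.reverse ++ l₂, [a], ?_, ?_, .singleton a⟩
    · exact (perm_append_singleton a _).trans
        (((reverse_perm l₁).append_right l₂).trans hperm |>.cons a)
    · refine (isChain_reverse.2 (h₁.imp fun _ _ h => hR.symm _ _ h)).append h₂ ?_
      rw [getLast?_reverse]
      rintro x' hx' y' hy'
      rw [Option.mem_def] at hx hy hx' hy'
      simp_all

lemma sq_sub_add_sq_sub_add_sq_sub_le_two {a b c : ℝ} (ha : a ∈ Set.Icc (0 : ℝ) 1)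
    (hb : b ∈ Set.Icc (0 : ℝ) 1) (hc : c ∈ Set.Icc (0 : ℝ) 1) :
    (a - b) ^ 2 + (a - c) ^ 2 + (b - c) ^ 2 ≤ 2 := by
  obtain ⟨ha₀, ha₁⟩ := ha
  obtain ⟨hb₀, hb₁⟩ := hb
  obtain ⟨hc₀, hc₁⟩ := hc
  nlinarith [mul_nonneg ha₀ hb₀, mul_nonneg hb₀ hc₀, mul_nonneg ha₀ hc₀,
    mul_nonneg (sub_nonneg.2 ha₁) (sub_nonneg.2 hb₁),
    mul_nonneg (sub_nonneg.2 hb₁) (sub_nonneg.2 hc₁),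
    mul_nonneg (sub_nonneg.2 ha₁) (sub_nonneg.2 hc₁)]

namespace EuclideanSpace

variable {ι : Type*} [Fintype ι] {x y z : EuclideanSpace ℝ ι}

lemma dist_le_sqrt_card_of_mem_Icc (hx : ∀ i, x i ∈ Set.Icc (0 : ℝ) 1)
    (hy : ∀ i, y i ∈ Set.Icc (0 : ℝ) 1) : dist x y ≤ √(Fintype.card ι) := by
  refine Real.le_sqrt_of_sq_le ?_
  rw [PiLp.dist_sq_eq_of_L2]
  calc ∑ i, dist (x i) (y i) ^ 2 ≤ ∑ _i : ι, (1 : ℝ) := Finset.sum_le_sum fun i _ => by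
        rw [Real.dist_eq, sq_abs]
        obtain ⟨hx₀, hx₁⟩ := hx i
        obtain ⟨hy₀, hy₁⟩ := hy i
        nlinarith
    _ = Fintype.card ι := by simp

lemma dist_sq_add_dist_sq_add_dist_sq_le_of_mem_Icc (hx : ∀ i, x i ∈ Set.Icc (0 : ℝ) 1)
    (hy : ∀ i, y i ∈ Set.Icc (0 : ℝ) 1) (hz : ∀ i, z i ∈ Set.Icc (0 : ℝ) 1) :
    dist x y ^ 2 + dist x z ^ 2 + dist y z ^ 2 ≤ 2 * Fintype.card ι := by
  simp only [PiLp.dist_sq_eq_of_L2, Real.dist_eq, sq_abs, ← Finset.sum_add_distrib]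
  calc ∑ i, ((x i - y i) ^ 2 + (x i - z i) ^ 2 + (y i - z i) ^ 2) ≤ ∑ _i : ι, (2 : ℝ) :=
        Finset.sum_le_sum fun i _ => sq_sub_add_sq_sub_add_sq_sub_le_two (hx i) (hy i) (hz i)
    _ = 2 * Fintype.card ι := by simp [mul_comm]

lemma exists_dist_le_of_mem_Icc (hx : ∀ i, x i ∈ Set.Icc (0 : ℝ) 1)
    (hy : ∀ i, y i ∈ Set.Icc (0 : ℝ) 1) (hz : ∀ i, z i ∈ Set.Icc (0 : ℝ) 1) :
    dist x y ≤ √(2 * Fintype.card ι / 3) ∨ dist x z ≤ √(2 * Fintype.card ι / 3) ∨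
      dist y z ≤ √(2 * Fintype.card ι / 3) := by
  have hsum := dist_sq_add_dist_sq_add_dist_sq_le_of_mem_Icc hx hy hz
  by_contra! h
  obtain ⟨hxy, hxz, hyz⟩ := h
  have key : ∀ {u v : EuclideanSpace ℝ ι}, √(2 * Fintype.card ι / 3) < dist u v →
      2 * Fintype.card ι / 3 < dist u v ^ 2 := fun h => Real.lt_sq_of_sqrt_lt h
  linarith [key hxy, key hxz, key hyz]

end EuclideanSpace

lemma List.Nodup.bijOn_getD {α : Type*} {l : List α} (hl : l.Nodup) (d : α) :
    Set.BijOn (fun i => l.getD i d) (Set.Iio l.length) {x | x ∈ l} := by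
  refine ⟨fun i hi => ?_, fun i hi j hj hij => ?_, fun x hx => ?_⟩
  · simp only [Set.mem_ofPred_eq, List.getD_eq_getElem _ _ hi]
    exact l.getElem_mem hi
  · simp only [List.getD_eq_getElem _ _ hi, List.getD_eq_getElem _ _ hj] at hij
    exact (hl.getElem_inj_iff).1 hij
  · obtain ⟨i, hi, rfl⟩ := List.mem_iff_getElem.1 hx
    exact ⟨i, hi, List.getD_eq_getElem _ _ hi⟩

lemma Finset.sum_le_card_mul_add_card_mul_sub {ι : Type*} [DecidableEq ι] (s t : Finset ι)
    {f : ι → ℝ} {b B : ℝ} (hB : ∀ i ∈ s, f i ≤ B) (hb : ∀ i ∈ s, i ∉ t → f i ≤ b)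
    (hbB : b ≤ B) :
    ∑ i ∈ s, f i ≤ s.card * b + t.card * (B - b) := by
  calc ∑ i ∈ s, f i ≤ ∑ i ∈ s, (b + if i ∈ t then B - b else 0) :=
        Finset.sum_le_sum fun i hi => by
          split_ifs with hit
          · linarith [hB i hi]
          · linarith [hb i hi hit]
    _ = s.card * b + (s ∩ t).card * (B - b) := by
        rw [Finset.sum_add_distrib, Finset.sum_ite_mem, Finset.sum_const, Finset.sum_const,
          nsmul_eq_mul, nsmul_eq_mul]
    _ ≤ s.card * b + t.card * (B - b) := by
        have : 0 ≤ B - b := sub_nonneg.2 hbB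
        gcongr
        exact Finset.inter_subset_right

lemma List.IsChain.rel_getElem_append {α : Type*} {R : α → α → Prop} {l₁ l₂ : List α}
    (h₁ : l₁.IsChain R) (h₂ : l₂.IsChain R) {i : ℕ} (hi : i + 1 < (l₁ ++ l₂).length)
    (him : i + 1 ≠ l₁.length) : R (l₁ ++ l₂)[i] (l₁ ++ l₂)[i + 1] := by
  rw [List.length_append] at hi
  rcases lt_or_gt_of_ne him with hlt | hgt
  · rw [List.getElem_append_left (by omega), List.getElem_append_left hlt]
    exact h₁.getElem i hlt
  · rw [List.getElem_append_right (by omega), List.getElem_append_right (by omega)]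
    have := h₂.getElem (i - l₁.length) (by omega)
    simpa only [show i - l₁.length + 1 = i + 1 - l₁.length by omega] using this

lemma List.sum_dist_getD_pow_le {α : Type*} [PseudoMetricSpace α] (l : List α) (d : α)
    (p m : ℕ) {b B : ℝ} (hb : 0 ≤ b) (hbB : b ≤ B) (hB : ∀ x ∈ l, ∀ y ∈ l, dist x y ≤ B)
    (hchain : ∀ i (hi : i + 1 < l.length), i + 1 ≠ m → dist l[i] l[i + 1] ≤ b) :
    ∑ i ∈ Finset.range l.length, dist (l.getD i d) (l.getD ((i + 1) % l.length) d) ^ p ≤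
      l.length * b ^ p + 2 * (B ^ p - b ^ p) := by
  classical
  have hsum := Finset.sum_le_card_mul_add_card_mul_sub (Finset.range l.length) {m - 1, l.length - 1}
    (f := fun i => dist (l.getD i d) (l.getD ((i + 1) % l.length) d) ^ p) (b := b ^ p) (B := B ^ p)
    (fun i hi => by
      rw [Finset.mem_range] at hi
      have hi' : (i + 1) % l.length < l.length := Nat.mod_lt _ (by omega)
      rw [List.getD_eq_getElem _ _ hi, List.getD_eq_getElem _ _ hi']
      exact pow_le_pow_left₀ dist_nonneg (hB _ (l.getElem_mem hi) _ (l.getElem_mem hi')) p)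
    (fun i hi hit => by
      simp only [Finset.mem_range, Finset.mem_insert, Finset.mem_singleton] at hi hit
      have hi' : i + 1 < l.length := by omega
      rw [Nat.mod_eq_of_lt hi', List.getD_eq_getElem _ _ hi', List.getD_eq_getElem _ _ (by omega)]
      exact pow_le_pow_left₀ dist_nonneg (hchain i hi' (by omega)) p)
    (pow_le_pow_left₀ hb hbB p)
  have hcard : (({m - 1, l.length - 1} : Finset ℕ).card : ℝ) ≤ 2 := by
    exact_mod_cast Finset.card_le_two
  have : 0 ≤ B ^ p - b ^ p := sub_nonneg.2 (pow_le_pow_left₀ hb hbB p)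
  rw [Finset.card_range] at hsum
  nlinarith

lemma sqrt_eight_thirds_mul_sqrt (x : ℝ) : √(8 / 3) * √x = 2 * √(2 * x / 3) := by
  rw [← Real.sqrt_mul (by norm_num), show 8 / 3 * x = 2 ^ 2 * (2 * x / 3) by ring,
    Real.sqrt_mul (by norm_num), Real.sqrt_sq (by norm_num)]

theorem stmt_19_general (k : ℕ)
    (X : Finset (EuclideanSpace ℝ (Fin k))) (hcard : X.card ≤ 2 ^ k + 2)
    (hcube : ∀ x ∈ X, ∀ i, x i ∈ Set.Icc (0 : ℝ) 1) :
    ∃ f : ℕ → EuclideanSpace ℝ (Fin k),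
      Set.BijOn f (Set.Iio X.card) ↑X ∧
      ∑ i ∈ Finset.range X.card, dist (f i) (f ((i + 1) % X.card)) ^ k ≤
        (2 + Real.sqrt (8 / 3) ^ k) * Real.sqrt k ^ k := by
  have hcube' : ∀ x ∈ X.toList, ∀ i, x i ∈ Set.Icc (0 : ℝ) 1 :=
    fun x hx => hcube x (Finset.mem_toList.1 hx)
  obtain ⟨l₁, l₂, hperm, h₁, h₂⟩ := List.exists_perm_append_isChain_isChain
    (R := fun x y => dist x y ≤ √(2 * k / 3)) ⟨fun x y h => (dist_comm y x).le.trans h⟩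
    X.toList
    fun x hx y hy z hz => by
      simpa using EuclideanSpace.exists_dist_le_of_mem_Icc (hcube' x hx) (hcube' y hy) (hcube' z hz)
  set L := l₁ ++ l₂
  have hlen : L.length = X.card := by rw [hperm.length_eq, Finset.length_toList]
  refine ⟨fun i => L.getD i 0, ?_, ?_⟩
  · convert (hperm.nodup_iff.2 X.nodup_toList).bijOn_getD 0 using 1
    · rw [hlen]
    · ext x; simp [hperm.mem_iff]
  · have hb : 0 ≤ √(2 * k / 3) := Real.sqrt_nonneg _
    have hbB : √(2 * k / 3) ≤ √k := Real.sqrt_le_sqrt (by linarith [k.cast_nonneg (α := ℝ)])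
    have hn : (L.length : ℝ) ≤ 2 ^ k + 2 := by rw [hlen]; exact_mod_cast hcard
    rw [← hlen]
    calc _ ≤ L.length * √(2 * k / 3) ^ k + 2 * (√k ^ k - √(2 * k / 3) ^ k) :=
          L.sum_dist_getD_pow_le 0 k l₁.length hb hbB
            (fun x hx y hy => by
              simpa using EuclideanSpace.dist_le_sqrt_card_of_mem_Icc
                (hcube' x (hperm.subset hx)) (hcube' y (hperm.subset hy)))
            fun i hi him => h₁.rel_getElem_append h₂ hi him
      _ ≤ 2 ^ k * √(2 * k / 3) ^ k + 2 * √k ^ k := by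
          nlinarith [pow_nonneg hb k]
      _ = _ := by rw [add_mul, ← mul_pow (√(8 / 3)), sqrt_eight_thirds_mul_sqrt, mul_pow]; ring

/-- For `k ≥ 3` and a set `X` of `n` points in `[0,1]^k` with `2 ≤ n ≤ 2^k + 2`, there is a
Hamiltonian cycle through the points with unscaled cost at most `(2 + (8/3)^{k/2})·k^{k/2}`. -/
theorem stmt_19 (k : ℕ) (hk : 3 ≤ k)
    (X : Finset (EuclideanSpace ℝ (Fin k))) (h2 : 2 ≤ X.card) (hcard : X.card ≤ 2 ^ k + 2)
    (hcube : ∀ x ∈ X, ∀ i, x i ∈ Set.Icc (0 : ℝ) 1) :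
    ∃ f : ℕ → EuclideanSpace ℝ (Fin k),
      Set.BijOn f (Set.Iio X.card) ↑X ∧
      ∑ i ∈ Finset.range X.card, dist (f i) (f ((i + 1) % X.card)) ^ k ≤
        (2 + Real.sqrt (8 / 3) ^ k) * Real.sqrt k ^ k :=
  stmt_19_general k X hcard hcube
end
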